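/- The alternating double S-value S(1̄,1̄) := 4·∑_{n₁>n₂≥1} (−1)^{n₁+n₂}/((2n₁−1)·(2n₂)) equals −2G + (1/2)·π·log 2. -/

import Mathlib

/-!
With the odd moments `ρₖ = ∫₀¹ u^(2k+1)/(1+u²) du`, which satisfy `ρₖ + ρₖ₊₁ = 1/(2k+2)` and
`ρ₀ = (log 2)/2`, the inner sum is `∑_{j ≤ m} (-1)^(j+1)/(2j+2) = -ρ₀ - (-1)^m ρₘ₊₁`. The double
series therefore splits into `-ρ₀` times a shifted Leibniz series, with sum `1 - π/4`, and the
tail of `∑ₖ ρₖ/(2k+1)`. Summing `∑ₖ u^(2k+1)/(2k+1) = artanh u` under the integral gives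
`∑ₖ ρₖ/(2k+1) = ∫₀¹ artanh u/(1+u²) du`, and the substitution `u = (1-t)/(1+t)` turns this into
`½ ∫₀¹ -log t/(1+t²) dt`, which is `G/2` after expanding `1/(1+t²)` geometrically, since
`∫₀¹ t^(2n) (-log t) dt = 1/(2n+1)²`.
-/

open Real Filter

/-- Catalan's constant. -/
noncomputable def catalanConst : ℝ := ∑' n : ℕ, (-1 : ℝ) ^ n / (2 * (n : ℝ) + 1) ^ 2

open MeasureTheory Set intervalIntegral

noncomputable def oddMoment (k : ℕ) : ℝ := ∫ u in (0 : ℝ)..1, u ^ (2 * k + 1) / (1 + u ^ 2)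

theorem continuous_pow_div_one_add_sq (n : ℕ) : Continuous fun u : ℝ => u ^ n / (1 + u ^ 2) :=
  (continuous_pow n).div (by fun_prop) fun u => by positivity

theorem oddMoment_nonneg (k : ℕ) : 0 ≤ oddMoment k :=
  integral_nonneg zero_le_one fun u hu => by have := hu.1; positivity

theorem oddMoment_add_oddMoment_succ (k : ℕ) :
    oddMoment k + oddMoment (k + 1) = 1 / (2 * k + 2) := by
  have hint (n : ℕ) : IntervalIntegrable (fun u : ℝ => u ^ n / (1 + u ^ 2)) volume 0 1 :=
    (continuous_pow_div_one_add_sq n).intervalIntegrable 0 1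
  rw [oddMoment, oddMoment, ← integral_add (hint _) (hint _)]
  have h : ∀ u : ℝ, u ^ (2 * k + 1) / (1 + u ^ 2) + u ^ (2 * (k + 1) + 1) / (1 + u ^ 2)
      = u ^ (2 * k + 1) := fun u => by field_simp; ring
  simp only [h, integral_pow]
  push_cast
  ring

theorem oddMoment_le (k : ℕ) : oddMoment k ≤ 1 / (2 * k + 2) := by
  linarith [oddMoment_add_oddMoment_succ k, oddMoment_nonneg (k + 1)]

theorem oddMoment_zero : oddMoment 0 = log 2 / 2 := by
  have hcont : Continuous fun u : ℝ => log (1 + u ^ 2) / 2 :=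
    ((continuous_const.add (continuous_pow 2)).log fun u =>
      (add_pos_of_pos_of_nonneg one_pos (sq_nonneg u)).ne').div_const 2
  have hderiv : ∀ u ∈ Ioo (0 : ℝ) 1,
      HasDerivAt (fun u => log (1 + u ^ 2) / 2) (u ^ (2 * 0 + 1) / (1 + u ^ 2)) u := fun u _ => by
    refine ((((hasDerivAt_pow 2 u).const_add 1).log (by positivity)).div_const 2).congr_deriv ?_
    push_cast
    ring
  rw [oddMoment, integral_eq_sub_of_hasDerivAt_of_le zero_le_one hcont.continuousOn hderiv
    ((continuous_pow_div_one_add_sq _).intervalIntegrable 0 1)]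
  norm_num

theorem sum_range_alternating_div_two_mul_add_two (m : ℕ) :
    ∑ j ∈ Finset.range (m + 1), (-1 : ℝ) ^ (j + 1) / (2 * j + 2)
      = -oddMoment 0 - (-1) ^ m * oddMoment (m + 1) := by
  induction m with
  | zero =>
    simp only [zero_add, Finset.sum_range_one, pow_one, CharP.cast_eq_zero, mul_zero, pow_zero,
      one_mul]
    linarith [oddMoment_add_oddMoment_succ 0]
  | succ m ih =>
    rw [Finset.sum_range_succ, ih]
    have := oddMoment_add_oddMoment_succ (m + 1)
    push_cast at this ⊢
    rw [div_eq_mul_one_div, ← this]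
    ring

theorem intervalIntegral.hasSum_integral_of_summable_integral_norm {ι E : Type*} [Countable ι]
    [NormedAddCommGroup E] [NormedSpace ℝ E] {F : ι → ℝ → E} {f : ℝ → E} {a b : ℝ} (hab : a ≤ b)
    (hF_int : ∀ i, IntervalIntegrable (F i) volume a b)
    (hF_sum : Summable fun i => ∫ x in a..b, ‖F i x‖)
    (hf : ∀ x ∈ Ioo a b, HasSum (fun i => F i x) (f x)) :
    HasSum (fun i => ∫ x in a..b, F i x) (∫ x in a..b, f x) := by
  simp only [integral_of_le hab] at hF_sum ⊢
  have hf_ae : ∀ᵐ x ∂volume.restrict (Ioc a b), HasSum (fun i => F i x) (f x) := by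
    rw [← Measure.restrict_congr_set Ioo_ae_eq_Ioc]
    exact ae_restrict_of_forall_mem measurableSet_Ioo hf
  rw [MeasureTheory.integral_congr_ae (hf_ae.mono fun x hx => hx.tsum_eq.symm)]
  exact MeasureTheory.hasSum_integral_of_summable_integral_norm
    (fun i => (hF_int i).def'.mono_set Ioc_subset_uIoc) hF_sum

theorem summable_one_div_two_mul_add_one_sq :
    Summable fun n : ℕ => 1 / (2 * (n : ℝ) + 1) ^ 2 := by
  refine (summable_nat_add_iff 1 |>.mpr (summable_one_div_nat_pow.mpr one_lt_two)).of_nonneg_of_le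
    (fun n => by positivity) fun n => ?_
  gcongr
  push_cast
  linarith

theorem hasSum_catalanConst :
    HasSum (fun n : ℕ => (-1 : ℝ) ^ n / (2 * (n : ℝ) + 1) ^ 2) catalanConst :=
  (summable_one_div_two_mul_add_one_sq.of_norm_bounded fun n => by simp).hasSum

theorem integral_pow_mul_neg_log (k : ℕ) :
    ∫ t in (0 : ℝ)..1, t ^ k * -log t = 1 / ((k : ℝ) + 1) ^ 2 := by
  have hk : (k : ℝ) + 1 ≠ 0 := by positivity
  have hcont : Continuous fun t : ℝ =>
      t ^ (k + 1) / ((k : ℝ) + 1) ^ 2 - t ^ (k + 1) * log t / (k + 1) := by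
    simp only [pow_succ, mul_assoc]
    exact ((continuous_pow _).mul continuous_id).div_const _ |>.sub <|
      ((continuous_pow k).mul continuous_mul_log).div_const _
  have hderiv : ∀ t ∈ Ioo (0 : ℝ) 1, HasDerivAt
      (fun t : ℝ => t ^ (k + 1) / ((k : ℝ) + 1) ^ 2 - t ^ (k + 1) * log t / (k + 1))
      (t ^ k * -log t) t := fun t ht => by
    refine (((hasDerivAt_pow (k + 1) t).div_const _).sub
      (((hasDerivAt_pow (k + 1) t).mul (hasDerivAt_log ht.1.ne')).div_const _)).congr_deriv ?_
    field_simp [ht.1.ne']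
    push_cast
    ring
  rw [integral_eq_sub_of_hasDerivAt_of_le zero_le_one hcont.continuousOn hderiv
    (intervalIntegrable_log'.neg.continuousOn_mul (continuous_pow k).continuousOn)]
  simp

theorem integral_neg_log_div_one_add_sq :
    ∫ t in (0 : ℝ)..1, -log t / (1 + t ^ 2) = catalanConst := by
  set F : ℕ → ℝ → ℝ := fun n t => (-1) ^ n * (t ^ (2 * n) * -log t)
  have hF_int : ∀ n, IntervalIntegrable (F n) volume 0 1 := fun n =>
    (intervalIntegrable_log'.neg.continuousOn_mul (continuous_pow _).continuousOn).const_mul _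
  have hF_norm : ∀ n, ∫ t in (0 : ℝ)..1, ‖F n t‖ = 1 / (2 * (n : ℝ) + 1) ^ 2 := fun n => by
    have h := integral_pow_mul_neg_log (2 * n)
    push_cast at h
    rw [← h]
    refine integral_congr fun t ht => ?_
    rw [uIcc_of_le zero_le_one] at ht
    simp [F, abs_of_nonpos (log_nonpos ht.1 ht.2), abs_of_nonneg ht.1]
  have hF_sum : ∀ t ∈ Ioo (0 : ℝ) 1, HasSum (fun n => F n t) (-log t / (1 + t ^ 2)) :=
    fun t ht => by
      have hgeom := hasSum_geometric_of_abs_lt_one (r := -t ^ 2) (by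
        rw [abs_neg, abs_of_nonneg (sq_nonneg t)]; nlinarith [ht.1, ht.2])
      have h := hgeom.mul_right (-log t)
      rw [sub_neg_eq_add, inv_mul_eq_div] at h
      refine h.congr_fun fun n => ?_
      simp only [F, neg_pow (t ^ 2), ← pow_mul]
      ring
  have h := intervalIntegral.hasSum_integral_of_summable_integral_norm zero_le_one hF_int
    (by simpa only [hF_norm] using summable_one_div_two_mul_add_one_sq) hF_sum
  refine h.unique (hasSum_catalanConst.congr_fun fun n => ?_)
  rw [intervalIntegral.integral_const_mul, integral_pow_mul_neg_log]
  push_cast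
  ring

theorem bijOn_one_sub_div_one_add :
    BijOn (fun t : ℝ => (1 - t) / (1 + t)) (Ioo 0 1) (Ioo 0 1) := by
  have hmaps : MapsTo (fun t : ℝ => (1 - t) / (1 + t)) (Ioo 0 1) (Ioo 0 1) := fun t ht => by
    have : 0 < 1 + t := by linarith [ht.1]
    constructor
    · exact div_pos (by linarith [ht.2]) this
    · rw [div_lt_one this]; linarith [ht.1]
  have hinv : LeftInvOn (fun t : ℝ => (1 - t) / (1 + t)) (fun t => (1 - t) / (1 + t)) (Ioo 0 1) :=
    fun t ht => by
      have : 1 + t ≠ 0 := by linarith [ht.1]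
      field_simp
      ring
  exact InvOn.bijOn ⟨hinv, hinv⟩ hmaps hmaps

theorem integral_log_sub_log_div_one_add_sq :
    ∫ u in (0 : ℝ)..1, (log (1 + u) - log (1 - u)) / (1 + u ^ 2) = catalanConst := by
  have hderiv : ∀ t ∈ Ioo (0 : ℝ) 1,
      HasDerivWithinAt (fun t => (1 - t) / (1 + t)) (-2 / (1 + t) ^ 2) (Ioo 0 1) t :=
    fun t ht => by
      have : 1 + t ≠ 0 := by linarith [ht.1]
      refine (((hasDerivAt_id t).const_sub 1).div ((hasDerivAt_id t).const_add 1) this).congr_deriv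
        ?_ |>.hasDerivWithinAt
      simp only [id]
      ring
  rw [← integral_neg_log_div_one_add_sq]
  simp only [integral_of_le zero_le_one, integral_Ioc_eq_integral_Ioo]
  conv_lhs => rw [← bijOn_one_sub_div_one_add.image_eq]
  rw [integral_image_eq_integral_abs_deriv_smul measurableSet_Ioo hderiv
    bijOn_one_sub_div_one_add.injOn]
  refine setIntegral_congr_fun measurableSet_Ioo fun t ht => ?_
  have h1 : 1 + t ≠ 0 := by linarith [ht.1]
  have h2 : 1 + (1 - t) / (1 + t) = 2 / (1 + t) := by field_simp; ring
  have h3 : 1 - (1 - t) / (1 + t) = 2 * t / (1 + t) := by field_simp; ring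
  rw [smul_eq_mul, h2, h3, log_div two_ne_zero h1, log_div (by linarith [ht.1]) h1,
    log_mul two_ne_zero ht.1.ne', abs_div, abs_of_pos (by positivity : (0 : ℝ) < (1 + t) ^ 2)]
  field_simp
  ring

theorem hasSum_oddMoment_div :
    HasSum (fun k : ℕ => oddMoment k / (2 * k + 1)) (catalanConst / 2) := by
  set F : ℕ → ℝ → ℝ := fun k u => (2 * (k : ℝ) + 1)⁻¹ * (u ^ (2 * k + 1) / (1 + u ^ 2))
  have hF_int : ∀ k, IntervalIntegrable (F k) volume 0 1 := fun k =>
    ((continuous_pow_div_one_add_sq _).intervalIntegrable 0 1).const_mul _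
  have hF_eq : ∀ k, ∫ u in (0 : ℝ)..1, F k u = oddMoment k / (2 * k + 1) := fun k => by
    rw [intervalIntegral.integral_const_mul, oddMoment, inv_mul_eq_div]
  have hF_norm : ∀ k, ∫ u in (0 : ℝ)..1, ‖F k u‖ = oddMoment k / (2 * k + 1) := fun k => by
    rw [← hF_eq]
    refine integral_congr fun u hu => ?_
    rw [uIcc_of_le zero_le_one] at hu
    have := hu.1
    exact Real.norm_of_nonneg (by positivity)
  have hF_summable : Summable fun k : ℕ => oddMoment k / (2 * k + 1) := by
    refine summable_one_div_two_mul_add_one_sq.of_nonneg_of_le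
      (fun k => div_nonneg (oddMoment_nonneg k) (by positivity)) fun k => ?_
    rw [sq, ← div_div]
    gcongr
    exact (oddMoment_le k).trans (one_div_le_one_div_of_le (by positivity) (by linarith))
  have hF_sum : ∀ u ∈ Ioo (0 : ℝ) 1,
      HasSum (fun k => F k u) ((log (1 + u) - log (1 - u)) / (1 + u ^ 2) / 2) := fun u hu => by
    have h := (hasSum_log_sub_log_of_abs_lt_one (abs_lt.mpr ⟨by linarith [hu.1], hu.2⟩)).div_const
      (2 * (1 + u ^ 2))
    rw [div_div, mul_comm (1 + u ^ 2)]
    refine h.congr_fun fun k => ?_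
    simp only [F]
    field_simp
  have h := intervalIntegral.hasSum_integral_of_summable_integral_norm zero_le_one hF_int
    (by simpa only [hF_norm] using hF_summable) hF_sum
  rw [intervalIntegral.integral_div, integral_log_sub_log_div_one_add_sq] at h
  simpa only [hF_eq] using h

theorem tendsto_sum_range_alternating_div_two_mul_add_three :
    Tendsto (fun N : ℕ => ∑ m ∈ Finset.range N, (-1 : ℝ) ^ m / (2 * m + 3)) atTop
      (nhds (1 - π / 4)) := by
  refine ((tendsto_sum_pi_div_four.comp (tendsto_add_atTop_nat 1)).const_sub 1).congr fun N => ?_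
  have h : ∀ i : ℕ, (-1 : ℝ) ^ (i + 1) / (2 * ((i + 1 : ℕ) : ℝ) + 1) = -((-1) ^ i / (2 * i + 3)) :=
    fun i => by push_cast; ring
  simp only [Function.comp_apply, Finset.sum_range_succ', h, Finset.sum_neg_distrib]
  norm_num

/-- `S(1̄,1̄) = 4·∑_{n=2}^∞ (−1)^n/(2n−1) · ∑_{k=1}^{n−1} (−1)^k/(2k) = −2G + (π/2)·log 2`,
stated as a limit of partial sums; here `n = m + 2` and `k = j + 1`. -/
theorem S_onebar_onebar :
    Tendsto (fun N : ℕ =>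
        4 * ∑ m ∈ Finset.range N, ((-1 : ℝ) ^ m / (2 * (m : ℝ) + 3)) *
          ∑ j ∈ Finset.range (m + 1), (-1 : ℝ) ^ (j + 1) / (2 * (j : ℝ) + 2))
      atTop (nhds (-2 * catalanConst + (1/2) * π * Real.log 2)) := by
  have hleibniz := tendsto_sum_range_alternating_div_two_mul_add_three.const_mul (-oddMoment 0)
  have htail := ((hasSum_nat_add_iff' 1).mpr hasSum_oddMoment_div).tendsto_sum_nat
  have hvalue : 4 * (-oddMoment 0 * (1 - π / 4) - (catalanConst / 2 - ∑ k ∈ Finset.range 1,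
      oddMoment k / (2 * k + 1))) = -2 * catalanConst + 1 / 2 * π * log 2 := by
    rw [Finset.sum_range_one, oddMoment_zero]
    push_cast
    ring
  rw [← hvalue]
  refine ((hleibniz.sub htail).const_mul 4).congr fun N => ?_
  rw [Finset.mul_sum, ← Finset.sum_sub_distrib]
  refine congrArg _ (Finset.sum_congr rfl fun m _ => ?_)
  have hsq : ((-1 : ℝ) ^ m) ^ 2 = 1 := by rw [← pow_mul, pow_mul']; norm_num
  rw [sum_range_alternating_div_two_mul_add_two]
  push_cast
  linear_combination (oddMoment (m + 1) / (2 * m + 3)) * hsq
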